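/- Suppose that the Credit Invariant and the Partial Solution Invariant hold for T, M, and I, that M has no twin links and no locking links, and that T/I admits no greedy link contraction. Then there is no deficient semi-closed tree T' of T/I with M(T') = ∅: any deficient semi-closed tree T' with |M'| = 0 would satisfy tickets(T') ≥ |L'| + 1 ≥ 2, contradicting its deficiency. -/
import Mathlib


open scoped Classical

namespace TAP

/-- A rooted tree on vertex set `V`, given by a parent function. -/
structure Tree (V : Type) where
  root : V
  parent : V → V
  parent_root : parent root = root
  reach : ∀ v, ∃ n, parent^[n] v = root

namespace Tree

variable {V : Type} (t : Tree V)

/-- `t.desc w v` : `v` lies in the rooted subtree `T_w`, i.e. `w` is an ancestor of `v` or `w = v`. -/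
def desc (w v : V) : Prop := ∃ n, t.parent^[n] v = w

/-- The depth of a node (its distance to the root). -/
noncomputable def depth (v : V) : ℕ :=
  @Nat.find (fun n => t.parent^[n] v = t.root) (Classical.decPred _) (t.reach v)

/-- `v` is a leaf of the tree: it is not the root and it has no children. -/
def IsLeaf (v : V) : Prop := v ≠ t.root ∧ ∀ u, u ≠ v → t.parent u ≠ v

/-- The tree edge `(w, parent w)` (for `w ≠ root`) lies on the tree path `P(u,v)`. -/
def onPath (w u v : V) : Prop :=
  (t.desc w u ∧ ¬ t.desc w v) ∨ (t.desc w v ∧ ¬ t.desc w u)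

/-- The node `c` lies on the tree path `P(u,v)`. -/
def onPathNode (c u v : V) : Prop :=
  (t.desc c u ∨ t.desc c v) ∧ ∀ w, t.desc w u → t.desc w v → t.desc w c

/-- `u` is the least common ancestor of `a` and `b`. -/
def IsLCA (u a b : V) : Prop :=
  t.desc u a ∧ t.desc u b ∧ ∀ w, t.desc w a → t.desc w b → t.desc w u

end Tree

variable {V : Type} [Fintype V] [DecidableEq V]

/-- The link `e` covers the tree edge `(w, parent w)`. -/
def covers (t : Tree V) (e : Sym2 V) (w : V) : Prop :=
  ∃ u v, e = s(u, v) ∧ t.onPath w u v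

/-- Some link of `F` covers the tree edge `(w, parent w)`. -/
def coveredBy (t : Tree V) (F : Finset (Sym2 V)) (w : V) : Prop :=
  ∃ e ∈ F, covers t e w

/-- `F` covers the tree: every tree edge is covered by some link of `F`
(equivalently, `T ∪ F` is 2-edge-connected). -/
def IsCover (t : Tree V) (F : Finset (Sym2 V)) : Prop :=
  ∀ w, w ≠ t.root → coveredBy t F w

/-- `e'` is a shadow of `e`, i.e. `P(e') ⊆ P(e)`. -/
def Shadow (t : Tree V) (e' e : Sym2 V) : Prop := ∀ w, covers t e' w → covers t e w

/-- `e'` is a proper shadow of `e`. -/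
def ProperShadow (t : Tree V) (e' e : Sym2 V) : Prop :=
  Shadow t e' e ∧ ∃ w, covers t e w ∧ ¬ covers t e' w

/-- The link set `E` is closed under shadows. -/
def ShadowClosed (t : Tree V) (E : Finset (Sym2 V)) : Prop :=
  ∀ e ∈ E, ∀ e' : Sym2 V, ¬ e'.IsDiag → Shadow t e' e → e' ∈ E

/-- `F` is an (inclusion-minimal) shadows-minimal cover: replacing any link of `F` by a
proper shadow of it destroys the covering property. -/
def ShadowsMinimal (t : Tree V) (F : Finset (Sym2 V)) : Prop :=
  IsCover t F ∧ (∀ e ∈ F, ¬ IsCover t (F.erase e)) ∧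
  ∀ e ∈ F, ∀ e' : Sym2 V, ProperShadow t e' e → ¬ IsCover t (insert e' (F.erase e))

/-- `deg Y x` : the number of links of `Y` incident to `x`. -/
noncomputable def deg (Y : Finset (Sym2 V)) (x : V) : ℕ := (Y.filter (fun e => x ∈ e)).card

/-! ### Contraction of a set of links -/

/-- `u` and `v` lie in the same 2-edge-connected component of `T ∪ I`,
i.e. they get identified in `T/I`. -/
def rel (t : Tree V) (I : Finset (Sym2 V)) (u v : V) : Prop :=
  ∀ w, w ≠ t.root → t.onPath w u v → coveredBy t I w

def relSetoid (t : Tree V) (I : Finset (Sym2 V)) : Setoid V where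
  r := rel t I
  iseqv := by
    refine ⟨?_, ?_, ?_⟩
    · intro u w _ hp
      rcases hp with ⟨h1, h2⟩ | ⟨h1, h2⟩ <;> exact absurd h1 h2
    · intro u v h w hw hp
      refine h w hw ?_
      rcases hp with ⟨h1, h2⟩ | ⟨h1, h2⟩
      · exact Or.inr ⟨h1, h2⟩
      · exact Or.inl ⟨h1, h2⟩
    · intro u v x h1 h2 w hw hp
      by_cases hv : t.desc w v
      · rcases hp with ⟨ha, hb⟩ | ⟨ha, hb⟩
        · exact h2 w hw (Or.inl ⟨hv, hb⟩)
        · exact h1 w hw (Or.inr ⟨hv, hb⟩)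
      · rcases hp with ⟨ha, hb⟩ | ⟨ha, hb⟩
        · exact h1 w hw (Or.inl ⟨ha, hv⟩)
        · exact h2 w hw (Or.inr ⟨ha, hv⟩)

/-- The node set of the contracted tree `T/I`. -/
abbrev QT (t : Tree V) (I : Finset (Sym2 V)) : Type := Quotient (relSetoid t I)

noncomputable instance instFintypeQT (t : Tree V) (I : Finset (Sym2 V)) : Fintype (QT t I) :=
  @Quotient.fintype V _ (relSetoid t I) (Classical.decRel _)

/-- The node of `T/I` corresponding to the node `x` of `T`. -/
def qm (t : Tree V) (I : Finset (Sym2 V)) (x : V) : QT t I := Quotient.mk (relSetoid t I) x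

/-- The class of `u` is a (possibly compound) leaf of `T/I`. -/
def qleafRep (t : Tree V) (I : Finset (Sym2 V)) (u : V) : Prop :=
  ¬ rel t I u t.root ∧ ∀ v, rel t I (t.parent v) u → rel t I v u

/-- The class of `u` lies in the rooted subtree of `T/I` rooted at the class of `v`. -/
def qdescRep (t : Tree V) (I : Finset (Sym2 V)) (v u : V) : Prop :=
  ∃ w, t.desc w u ∧ rel t I w v

/-- The class of `u` is a compound node of `T/I` (a contracted component, or the root). -/
def qcompoundRep (t : Tree V) (I : Finset (Sym2 V)) (u : V) : Prop :=
  (∃ w, w ≠ u ∧ rel t I u w) ∨ rel t I u t.root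

/-- The node `x` of `T` lies in the rooted subtree of `T/I` whose root is the class `c`. -/
def inT (t : Tree V) (I : Finset (Sym2 V)) (c : QT t I) (x : V) : Prop :=
  qdescRep t I c.out x

/-- The node `d` of `T/I` lies in the rooted subtree of `T/I` whose root is `c`. -/
def below (t : Tree V) (I : Finset (Sym2 V)) (c d : QT t I) : Prop := inT t I c d.out

/-- The class of `x` is matched by the matching `M`. -/
def matchedRep (t : Tree V) (I M : Finset (Sym2 V)) (x : V) : Prop :=
  ∃ e ∈ M, ∃ z, z ∈ e ∧ rel t I z x

/-- The class of `x` lies on the path of `T/I` between the classes of `u` and of `v`. -/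
def qOnPathNode (t : Tree V) (I : Finset (Sym2 V)) (x u v : V) : Prop :=
  (qdescRep t I x u ∨ qdescRep t I x v) ∧
  ∀ w, qdescRep t I w u → qdescRep t I w v → qdescRep t I w x

/-- The class of `x` is the least common ancestor in `T/I` of the classes of `a` and `b`. -/
def qIsLCA (t : Tree V) (I : Finset (Sym2 V)) (x a b : V) : Prop :=
  qdescRep t I x a ∧ qdescRep t I x b ∧
  ∀ w, qdescRep t I w a → qdescRep t I w b → qdescRep t I w x

/-- Depth of the class of `x` in `T/I`. -/
noncomputable def qdepth (t : Tree V) (I : Finset (Sym2 V)) (x : V) : ℕ :=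
  (Finset.univ.filter (fun w => w ≠ t.root ∧ ¬ coveredBy t I w ∧ t.desc w x)).card

/-- `u` is an up-node of (the class of) `a` in `T/I` : among all links of `E` leaving the
class of `a`, some link from the class of `a` to `u` has its other end as close as possible
to the root. -/
def qUpNode (t : Tree V) (I E : Finset (Sym2 V)) (a u : V) : Prop :=
  (∃ b, rel t I b a ∧ s(b, u) ∈ E) ∧ ¬ rel t I u a ∧
  ∀ b x, rel t I b a → s(b, x) ∈ E → ¬ rel t I x a → qdepth t I u ≤ qdepth t I x

/-- `s(a,b)` is a twin link of `T/I` : a link of `E` between two distinct leaves of `T/I`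
whose contraction results in a new leaf. -/
def qTwinAt (t : Tree V) (I E : Finset (Sym2 V)) (a b : V) : Prop :=
  qleafRep t I a ∧ qleafRep t I b ∧ ¬ rel t I a b ∧ s(a, b) ∈ E ∧
  qleafRep t (insert (s(a, b)) I) a

/-- The class of `x` is a stem of `T/I` : the least common ancestor of the two ends
of a twin link. -/
def qStem (t : Tree V) (I E : Finset (Sym2 V)) (x : V) : Prop :=
  ∃ a b, qTwinAt t I E a b ∧ qIsLCA t I x a b

/-! ### Twin links, stems, up-links and locked leaves in the original tree -/

/-- `a` and `b` are twins: two leaves such that the contraction of the link `ab`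
results in a new leaf. -/
def TwinPair (t : Tree V) (a b : V) : Prop :=
  t.IsLeaf a ∧ t.IsLeaf b ∧ a ≠ b ∧ qleafRep t {s(a, b)} a

/-- `e` is a twin link. -/
def IsTwinLinkE (t : Tree V) (e : Sym2 V) : Prop := ∃ a b, e = s(a, b) ∧ TwinPair t a b

/-- `x` is a stem: the least common ancestor of two twins. -/
def IsStem (t : Tree V) (E : Finset (Sym2 V)) (x : V) : Prop :=
  ∃ a b, TwinPair t a b ∧ s(a, b) ∈ E ∧ t.IsLCA x a b

noncomputable def stems (t : Tree V) (E : Finset (Sym2 V)) : Finset V :=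
  Finset.univ.filter (IsStem t E)

/-- `X = V \ (L ∪ S)`. -/
noncomputable def Xset (t : Tree V) (E : Finset (Sym2 V)) : Finset V :=
  Finset.univ.filter (fun x => ¬ t.IsLeaf x ∧ ¬ IsStem t E x)

/-- `s(a,u)` is the up-link of `a` : among all links of `E` at `a`, its other end `u` is
as close as possible to the root (`u` is the up-node of `a`). -/
def IsUpLink (t : Tree V) (E : Finset (Sym2 V)) (a u : V) : Prop :=
  s(a, u) ∈ E ∧ ∀ x, s(a, x) ∈ E → t.depth u ≤ t.depth x

/-- The rooted subtree `T_v` is `a`-closed: it contains the up-node of `a`. -/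
def AClosed (t : Tree V) (E : Finset (Sym2 V)) (v a : V) : Prop :=
  ∀ u, IsUpLink t E a u → t.desc v u

/-- The rooted proper subtree `T_v` witnesses that the leaf `a` is locked by the link `bb'` :
`L(T_v) = {a,b,b'}`, `ab` is a twin link and `T_v` is `a`-closed. -/
def LocksAt (t : Tree V) (E : Finset (Sym2 V)) (b b' a v : V) : Prop :=
  v ≠ t.root ∧ s(b, b') ∈ E ∧ b ≠ b' ∧ b' ≠ a ∧
  {x | t.IsLeaf x ∧ t.desc v x} = {a, b, b'} ∧
  TwinPair t a b ∧ s(a, b) ∈ E ∧ AClosed t E v a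

/-- The leaf `a` is locked by the link `bb'`. -/
def Locks (t : Tree V) (E : Finset (Sym2 V)) (b b' a : V) : Prop :=
  ∃ v, LocksAt t E b b' a v

def IsLockedLeaf (t : Tree V) (E : Finset (Sym2 V)) (a : V) : Prop :=
  ∃ b b', Locks t E b b' a

def IsLockingLink (t : Tree V) (E : Finset (Sym2 V)) (e : Sym2 V) : Prop :=
  ∃ b b' a, e = s(b, b') ∧ Locks t E b b' a

/-- `T_v` is the locking tree of `a` (with locking link `bb'`): the minimal rooted subtree
witnessing the lock. -/
def IsLockingTree (t : Tree V) (E : Finset (Sym2 V)) (a b b' v : V) : Prop :=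
  LocksAt t E b b' a v ∧ ∀ v', LocksAt t E b b' a v' → t.desc v' v

/-! ### The fixed optimal cover `F` -/

noncomputable def twinCount (t : Tree V) (F : Finset (Sym2 V)) : ℕ :=
  (F.filter (fun e => IsTwinLinkE t e)).card

/-- `F` is an optimal (minimum-size) shadows-minimal cover of `T` with the maximum
number of twin links. -/
def IsGoodCover (t : Tree V) (E F : Finset (Sym2 V)) : Prop :=
  F ⊆ E ∧ ShadowsMinimal t F ∧
  (∀ F' : Finset (Sym2 V), F' ⊆ E → IsCover t F' → F.card ≤ F'.card) ∧
  (∀ F' : Finset (Sym2 V), F' ⊆ E → ShadowsMinimal t F' → F'.card = F.card →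
    twinCount t F' ≤ twinCount t F)

/-! ### Matchings and the lower bound -/

def IsMatching (M : Finset (Sym2 V)) : Prop :=
  (∀ e ∈ M, ¬ e.IsDiag) ∧ ∀ e ∈ M, ∀ f ∈ M, e ≠ f → ∀ x, x ∈ e → x ∉ f

/-- `E(L,L)` : the links of `E` joining two leaves. -/
noncomputable def leafLinks (t : Tree V) (E : Finset (Sym2 V)) : Finset (Sym2 V) :=
  E.filter (fun e => ∀ x ∈ e, t.IsLeaf x)

/-- `W` : the set of twin links and locking links. -/
noncomputable def Wlinks (t : Tree V) (E : Finset (Sym2 V)) : Finset (Sym2 V) :=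
  E.filter (fun e => IsTwinLinkE t e ∨ IsLockingLink t E e)

/-- `M` is a maximum matching in `E(L,L) \ W`. -/
def IsMaxLeafMatching (t : Tree V) (E M : Finset (Sym2 V)) : Prop :=
  M ⊆ leafLinks t E \ Wlinks t E ∧ IsMatching M ∧
  ∀ M' : Finset (Sym2 V), M' ⊆ leafLinks t E \ Wlinks t E → IsMatching M' → M'.card ≤ M.card

/-- `U` : the set of leaves unmatched by `M`. -/
noncomputable def unmatchedLeaves (t : Tree V) (M : Finset (Sym2 V)) : Finset V :=
  Finset.univ.filter (fun a => t.IsLeaf a ∧ ∀ e ∈ M, a ∉ e)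

/-- `M_F = F(L,L) \ W`. -/
noncomputable def MFlinks (t : Tree V) (E F : Finset (Sym2 V)) : Finset (Sym2 V) :=
  (F.filter (fun e => ∀ x ∈ e, t.IsLeaf x)) \ Wlinks t E

/-- `N = {bb' ∈ M : each of b, b' is unmatched by M_F}`. -/
noncomputable def Nlinks (t : Tree V) (E F M : Finset (Sym2 V)) : Finset (Sym2 V) :=
  M.filter (fun e => ∀ b ∈ e, ∀ f ∈ MFlinks t E F, b ∉ f)

/-- `J` : the set of links of `F` not incident to a locked leaf. -/
noncomputable def Jlinks (t : Tree V) (E F : Finset (Sym2 V)) : Finset (Sym2 V) :=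
  F.filter (fun e => ∀ x ∈ e, ¬ IsLockedLeaf t E x)

/-- The lower bound `(3/2)|M| + |U| + (1/2)|N| + (1/2) Σ_{x ∈ X} d_J(x)`. -/
noncomputable def LB (t : Tree V) (E F M : Finset (Sym2 V)) : ℚ :=
  (3 / 2 : ℚ) * (M.card : ℚ) + ((unmatchedLeaves t M).card : ℚ)
    + (1 / 2 : ℚ) * ((Nlinks t E F M).card : ℚ)
    + (1 / 2 : ℚ) * ∑ x ∈ Xset t E, (deg (Jlinks t E F) x : ℚ)

/-! ### Subtrees of `T/I`, semi-closed trees, credits -/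

/-- `T'` (the rooted subtree of `T/I` with root `c`) is `M`-compatible. -/
def MCompatible (t : Tree V) (I M : Finset (Sym2 V)) (c : QT t I) : Prop :=
  ∀ e ∈ M, (∀ x ∈ e, inT t I c x) ∨ (∀ x ∈ e, ¬ inT t I c x)

/-- `T'` is semi-closed (w.r.t. `M`): `M`-compatible and closed w.r.t. its unmatched leaves. -/
def SemiClosedQ (t : Tree V) (I E M : Finset (Sym2 V)) (c : QT t I) : Prop :=
  MCompatible t I M c ∧
  ∀ x y, s(x, y) ∈ E → inT t I c x → qleafRep t I x → ¬ matchedRep t I M x → inT t I c y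

/-- `T'` is minimally semi-closed. -/
def MinSemiClosedQ (t : Tree V) (I E M : Finset (Sym2 V)) (c : QT t I) : Prop :=
  SemiClosedQ t I E M c ∧
  ∀ c' : QT t I, below t I c c' → c' ≠ c → ¬ SemiClosedQ t I E M c'

/-- `I'` is an exact cover of `T'` : the set of edges of `T/I` covered by `I'` is exactly
the edge set of `T'`. -/
def IsExactCoverQ (t : Tree V) (I : Finset (Sym2 V)) (c : QT t I) (I' : Finset (Sym2 V)) : Prop :=
  ∀ w, w ≠ t.root → ¬ coveredBy t I w → (coveredBy t I' w ↔ inT t I c (t.parent w))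

/-- `up(U')` : the set of up-links of the unmatched leaves of `T'`. -/
noncomputable def upOfQ (t : Tree V) (I E M : Finset (Sym2 V)) (c : QT t I) :
    Finset (Sym2 V) :=
  E.filter (fun e => ∃ a u, e = s(a, u) ∧ inT t I c a ∧ qleafRep t I a ∧
    ¬ matchedRep t I M a ∧ qUpNode t I E a u)

/-- `M` is a matching on the leaves of `T/I`. -/
def IsLeafMatchingQ (t : Tree V) (I M : Finset (Sym2 V)) : Prop :=
  (∀ e ∈ M, ∃ a b, e = s(a, b) ∧ qleafRep t I a ∧ qleafRep t I b ∧ ¬ rel t I a b) ∧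
  ∀ e ∈ M, ∀ f ∈ M, e ≠ f → ∀ x, x ∈ e → ∀ y, y ∈ f → ¬ rel t I x y

/-- `L' = L(T')` as a set of nodes of `T/I`. -/
noncomputable def LsetQ (t : Tree V) (I : Finset (Sym2 V)) (c : QT t I) : Finset (QT t I) :=
  Finset.univ.filter (fun d => below t I c d ∧ qleafRep t I d.out)

/-- `U'` : the `M`-unmatched leaves of `T'`. -/
noncomputable def UsetQ (t : Tree V) (I M : Finset (Sym2 V)) (c : QT t I) : Finset (QT t I) :=
  Finset.univ.filter
    (fun d => below t I c d ∧ qleafRep t I d.out ∧ ¬ matchedRep t I M d.out)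

/-- `C'` : the non-leaf compound nodes of `T'`. -/
noncomputable def CsetQ (t : Tree V) (I : Finset (Sym2 V)) (c : QT t I) : Finset (QT t I) :=
  Finset.univ.filter
    (fun d => below t I c d ∧ qcompoundRep t I d.out ∧ ¬ qleafRep t I d.out)

/-- `M' = M(T')` : the links of `M` with both ends in `T'`. -/
noncomputable def MlinksQ (t : Tree V) (I M : Finset (Sym2 V)) (c : QT t I) :
    Finset (Sym2 V) :=
  M.filter (fun e => ∀ x ∈ e, inT t I c x)

/-- `S'` : the stems of `T'`. -/
noncomputable def SsetQ (t : Tree V) (I E : Finset (Sym2 V)) (c : QT t I) : Finset (QT t I) :=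
  Finset.univ.filter (fun d => below t I c d ∧ qStem t I E d.out)

/-- `S'_1` : the stems of `T'` whose twin link lies in `F`. -/
noncomputable def S1setQ (t : Tree V) (I E F : Finset (Sym2 V)) (c : QT t I) :
    Finset (QT t I) :=
  Finset.univ.filter (fun d => below t I c d ∧
    ∃ a b, qTwinAt t I E a b ∧ s(a, b) ∈ F ∧ qIsLCA t I d.out a b)

/-- `X'` : the original nodes of `T'` lying in `X`. -/
noncomputable def XsetQ (t : Tree V) (I E : Finset (Sym2 V)) (c : QT t I) : Finset (QT t I) :=
  Finset.univ.filter
    (fun d => below t I c d ∧ ¬ qcompoundRep t I d.out ∧ d.out ∈ Xset t E)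

/-- `tickets(T') = |N(T')| + Σ_{x ∈ X'} d_J(x)`. -/
noncomputable def ticketsQ (t : Tree V) (I E F M : Finset (Sym2 V)) (c : QT t I) : ℕ :=
  ((Nlinks t E F M).filter (fun e => ∀ x ∈ e, inT t I c x)).card
    + ∑ d ∈ XsetQ t I E c, deg (Jlinks t E F) d.out

/-- `coupons(T')` : one coupon for each unmatched leaf and each compound node of `T'`,
and `3/2` coupons for each link of `M(T')`. -/
noncomputable def couponsQ (t : Tree V) (I M : Finset (Sym2 V)) (c : QT t I) : ℚ :=
  ((Finset.univ.filter (fun d : QT t I => below t I c d ∧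
      ((qleafRep t I d.out ∧ ¬ matchedRep t I M d.out) ∨ qcompoundRep t I d.out))).card : ℚ)
    + (3 / 2 : ℚ) * ((MlinksQ t I M c).card : ℚ)

/-- `credit(T') = coupons(T') + tickets(T')/2`. -/
noncomputable def creditQ (t : Tree V) (I E F M : Finset (Sym2 V)) (c : QT t I) : ℚ :=
  couponsQ t I M c + (ticketsQ t I E F M c : ℚ) / 2

/-- `T'` is deficient: `credit(T') < |U'| + |M'| + 1`. -/
def DeficientQ (t : Tree V) (I E F M : Finset (Sym2 V)) (c : QT t I) : Prop :=
  creditQ t I E F M c < ((UsetQ t I M c).card : ℚ) + ((MlinksQ t I M c).card : ℚ) + 1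

/-! ### Invariants and greedy steps -/

/-- Credit Invariant: the credit of every subtree of `T/I` is distributed as described:
coupons on unmatched leaves, compound nodes and links of `M`, tickets on links of `N` and
original nodes of `X`. -/
def CreditInvariant (t : Tree V) (E F M I : Finset (Sym2 V)) : Prop :=
  F ⊆ E ∧ M ⊆ E ∧
  ∀ c : QT t I, creditQ t I E F M c = couponsQ t I M c + (ticketsQ t I E F M c : ℚ) / 2

/-- Degree in `T/I` : the number of links of `F` with exactly one end in the class of `x`. -/
noncomputable def qdegQ (t : Tree V) (I F : Finset (Sym2 V)) (x : V) : ℕ :=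
  (F.filter (fun e => (∃ z, z ∈ e ∧ rel t I z x) ∧ ∃ z, z ∈ e ∧ ¬ rel t I z x)).card

/-- Matching Invariant: `M` is a matching on the leaves of `T/I` and `d_F(b) = 1` for
every leaf `b` of `T/I` matched by `M`. -/
def MatchingInvariant (t : Tree V) (F M I : Finset (Sym2 V)) : Prop :=
  IsLeafMatchingQ t I M ∧ ∀ e ∈ M, ∀ b, b ∈ e → qdegQ t I F b = 1

/-- A greedy locking-tree contraction step. -/
def LockStep (t : Tree V) (E M : Finset (Sym2 V)) (I I₂ : Finset (Sym2 V)) : Prop :=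
  ∃ a b b' v u,
    IsLockingTree t E a b b' v ∧
    (∀ e ∈ M, a ∉ e) ∧ (∀ e ∈ M, b ∉ e) ∧ (∀ e ∈ M, b' ∉ e) ∧
    (∀ c c' v', IsLockingTree t E b c c' v' → t.desc v v') ∧
    IsUpLink t E a u ∧ I₂ = I ∪ {s(b, b'), s(a, u)}

/-- A greedy link contraction step: contract a link of `E` joining two `M`-unmatched
leaves of `T/I`. -/
def LinkStep (t : Tree V) (E M : Finset (Sym2 V)) (I I₂ : Finset (Sym2 V)) : Prop :=
  ∃ x y, s(x, y) ∈ E ∧ ¬ rel t I x y ∧ qleafRep t I x ∧ qleafRep t I y ∧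
    ¬ matchedRep t I M x ∧ ¬ matchedRep t I M y ∧ I₂ = insert (s(x, y)) I

/-- Contraction of a semi-closed tree with an exact cover. -/
def SemiStep (t : Tree V) (E M : Finset (Sym2 V)) (I I₂ : Finset (Sym2 V)) : Prop :=
  ∃ (c : QT t I) (I' : Finset (Sym2 V)), I' ⊆ E ∧ SemiClosedQ t I E M c ∧
    IsExactCoverQ t I c I' ∧ I₂ = I ∪ I'

/-- A sequence of greedy locking-tree contractions starting from the empty partial solution. -/
inductive LockPhase {V : Type} [Fintype V] [DecidableEq V]
    (t : Tree V) (E M : Finset (Sym2 V)) : Finset (Sym2 V) → Prop where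
  | base : LockPhase t E M ∅
  | step {I I₂ : Finset (Sym2 V)} :
      LockPhase t E M I → LockStep t E M I I₂ → LockPhase t E M I₂

/-- Partial Solution Invariant: `I` is obtained by first exhausting greedy locking-tree
contractions, and then sequentially applying greedy link contractions or contractions of
semi-closed trees with exact covers. -/
inductive PSI {V : Type} [Fintype V] [DecidableEq V]
    (t : Tree V) (E M : Finset (Sym2 V)) : Finset (Sym2 V) → Prop where
  | start {I : Finset (Sym2 V)} :
      LockPhase t E M I → (∀ I₂, ¬ LockStep t E M I I₂) → PSI t E M I
  | link {I I₂ : Finset (Sym2 V)} : PSI t E M I → LinkStep t E M I I₂ → PSI t E M I₂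
  | semi {I I₂ : Finset (Sym2 V)} : PSI t E M I → SemiStep t E M I I₂ → PSI t E M I₂

/-! ### Dangerous trees -/

/-- The witness structure of a 3-leaf dangerous tree: `a` is the unmatched leaf,
`b, b'` are the matched leaves, `ab' ∈ E`, the contraction of `ab'` does not create a new
leaf, and `T'` is `b`-open. -/
def Witness3 (t : Tree V) (I E M : Finset (Sym2 V)) (c : QT t I) (a b b' : V) : Prop :=
  inT t I c a ∧ inT t I c b ∧ inT t I c b' ∧
  qleafRep t I a ∧ qleafRep t I b ∧ qleafRep t I b' ∧
  ¬ rel t I a b ∧ ¬ rel t I a b' ∧ ¬ rel t I b b' ∧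
  ¬ matchedRep t I M a ∧ matchedRep t I M b ∧ matchedRep t I M b' ∧
  (∃ x y, s(x, y) ∈ E ∧ rel t I x a ∧ rel t I y b' ∧
    ¬ qleafRep t (insert (s(x, y)) I) x) ∧
  (∃ u, qUpNode t I E b u ∧ ¬ inT t I c u)

/-- A 3-leaf dangerous tree. -/
def Dangerous3 (t : Tree V) (I E M : Finset (Sym2 V)) (c : QT t I) : Prop :=
  SemiClosedQ t I E M c ∧ (CsetQ t I c).card = 0 ∧ (MlinksQ t I M c).card = 1 ∧
  (LsetQ t I c).card = 3 ∧ (SsetQ t I E c).card = 0 ∧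
  ∃ a b b', Witness3 t I E M c a b b'

/-- A dangerous tree: a 3-leaf dangerous tree, or a 4-leaf tree with one stem, exactly one
twin of which is matched, such that contracting the twin link yields a 3-leaf dangerous tree. -/
def Dangerous (t : Tree V) (I E M : Finset (Sym2 V)) (c : QT t I) : Prop :=
  Dangerous3 t I E M c ∨
  (SemiClosedQ t I E M c ∧ (CsetQ t I c).card = 0 ∧ (MlinksQ t I M c).card = 1 ∧
    (LsetQ t I c).card = 4 ∧ (SsetQ t I E c).card = 1 ∧
    ∃ a b, qTwinAt t I E a b ∧ inT t I c a ∧ inT t I c b ∧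
      (matchedRep t I M a ↔ ¬ matchedRep t I M b) ∧
      Dangerous3 t (insert (s(a, b)) I) E M (qm t (insert (s(a, b)) I) c.out))

/-! ### The switching construction -/

/-- `W̃` : for every 4-leaf minimally semi-closed (dangerous) tree of `T/I`, its twin link. -/
noncomputable def Wtil (t : Tree V) (I E M : Finset (Sym2 V)) : Finset (Sym2 V) :=
  E.filter (fun e => ∃ (a b : V) (c : QT t I), e = s(a, b) ∧ MinSemiClosedQ t I E M c ∧
    (LsetQ t I c).card = 4 ∧ qTwinAt t I E a b ∧ inT t I c a ∧ inT t I c b)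

/-- The canonical ordering witness of a 3-leaf dangerous tree: if both orderings of the
matched leaves qualify, the up-node of `b` is an ancestor of the up-node of `b'`. -/
def Witness3Canon (t : Tree V) (I E M : Finset (Sym2 V)) (c : QT t I) (a b b' : V) : Prop :=
  Witness3 t I E M c a b b' ∧
  (Witness3 t I E M c a b' b →
    ∃ u u', qUpNode t I E b u ∧ qUpNode t I E b' u' ∧ qdescRep t I u u')

/-- `M̃` is obtained from `M` by switching, in each (3-leaf dangerous) tree `D̃` of `T̃`
corresponding to a minimally semi-closed tree of `T/I`, the matching link `bb'` to `ab'`. -/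
def SwitchedMatching (t : Tree V) (I E M Mt : Finset (Sym2 V)) : Prop :=
  ∀ e : Sym2 V, e ∈ Mt ↔
    ((e ∈ M ∧ ∀ c : QT t I, MinSemiClosedQ t I E M c →
        ∀ x, x ∈ e → ¬ inT t (I ∪ Wtil t I E M) (qm t (I ∪ Wtil t I E M) c.out) x) ∨
     (∃ (c : QT t I) (a b b' x y : V), MinSemiClosedQ t I E M c ∧
        Witness3Canon t (I ∪ Wtil t I E M) E M (qm t (I ∪ Wtil t I E M) c.out) a b b' ∧
        e = s(x, y) ∧ e ∈ E ∧ rel t (I ∪ Wtil t I E M) x a ∧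
        rel t (I ∪ Wtil t I E M) y b' ∧
        ¬ qleafRep t (insert e (I ∪ Wtil t I E M)) x))

/-! ### Auxiliary lemmas for the proof -/

section Aux

set_option linter.unusedSectionVars false

variable {V : Type} [Fintype V] [DecidableEq V] {t : Tree V}

namespace Tree

lemma desc_refl (t : Tree V) (v : V) : t.desc v v := ⟨0, rfl⟩

lemma desc_of_parent_desc {w z : V} (h : t.desc w (t.parent z)) : t.desc w z := by
  obtain ⟨n, hn⟩ := h
  exact ⟨n + 1, by rw [Function.iterate_succ_apply]; exact hn⟩

lemma desc_trans {w v z : V} (h1 : t.desc w v) (h2 : t.desc v z) : t.desc w z := by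
  obtain ⟨n, hn⟩ := h1; obtain ⟨m, hm⟩ := h2
  exact ⟨n + m, by rw [Function.iterate_add_apply, hm, hn]⟩

lemma iterate_root (t : Tree V) (n : ℕ) : t.parent^[n] t.root = t.root := by
  induction n with
  | zero => rfl
  | succ n ih => rw [Function.iterate_succ_apply', ih, t.parent_root]

lemma desc_root (t : Tree V) (v : V) : t.desc t.root v := t.reach v

lemma eq_root_of_desc {w : V} (h : t.desc w t.root) : w = t.root := by
  obtain ⟨n, hn⟩ := h
  rw [iterate_root] at hn; exact hn.symm

lemma depth_spec (t : Tree V) (v : V) : t.parent^[t.depth v] v = t.root :=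
  @Nat.find_spec _ (Classical.decPred _) (t.reach v)

lemma depth_le {v : V} {n : ℕ} (h : t.parent^[n] v = t.root) : t.depth v ≤ n :=
  @Nat.find_min' _ (Classical.decPred _) (t.reach v) n h

lemma depth_root (t : Tree V) : t.depth t.root = 0 :=
  Nat.le_zero.mp (depth_le (by rfl))

lemma eq_root_of_depth_zero {v : V} (h : t.depth v = 0) : v = t.root := by
  have h2 := depth_spec t v
  rw [h] at h2; exact h2

lemma depth_parent {v : V} (hv : v ≠ t.root) : t.depth v = t.depth (t.parent v) + 1 := by
  have h0 : t.depth v ≠ 0 := fun h => hv (eq_root_of_depth_zero h)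
  obtain ⟨d, hd⟩ : ∃ d, t.depth v = d + 1 :=
    ⟨t.depth v - 1, (Nat.succ_pred_eq_of_pos (Nat.pos_of_ne_zero h0)).symm⟩
  have h1 : t.parent^[d] (t.parent v) = t.root := by
    have h2 := depth_spec t v
    rwa [hd, Function.iterate_succ_apply] at h2
  have h2 : t.depth (t.parent v) ≤ d := depth_le h1
  have h3 : t.depth v ≤ t.depth (t.parent v) + 1 :=
    depth_le (by rw [Function.iterate_succ_apply]; exact depth_spec t (t.parent v))
  omega

lemma depth_iterate (t : Tree V) (n : ℕ) (v : V) :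
    t.depth (t.parent^[n] v) = t.depth v - n ∨ t.parent^[n] v = t.root := by
  induction n with
  | zero => left; simp
  | succ n ih =>
    rw [Function.iterate_succ_apply']
    rcases ih with h | h
    · by_cases hr : t.parent^[n] v = t.root
      · right; rw [hr, t.parent_root]
      · left
        have h2 := depth_parent (t := t) hr
        omega
    · right; rw [h, t.parent_root]

lemma depth_le_of_desc {w v : V} (h : t.desc w v) : t.depth w ≤ t.depth v := by
  obtain ⟨n, hn⟩ := h
  rcases depth_iterate t n v with h' | h' <;> rw [hn] at h'
  · omega
  · rw [h', depth_root]; exact Nat.zero_le _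

lemma eq_of_desc_of_depth_le {w v : V} (h : t.desc w v) (hd : t.depth v ≤ t.depth w) :
    w = v := by
  obtain ⟨n, hn⟩ := h
  rcases depth_iterate t n v with h' | h' <;> rw [hn] at h'
  · by_cases hv : t.depth v = 0
    · have hvr := eq_root_of_depth_zero hv
      rw [hvr] at hn ⊢
      rw [iterate_root] at hn; exact hn.symm
    · have hn0 : n = 0 := by omega
      rw [hn0] at hn; exact hn.symm
  · have hv : t.depth v = 0 := by rw [h', depth_root] at hd; omega
    have hvr := eq_root_of_depth_zero hv
    rw [hvr] at hn ⊢
    rw [iterate_root] at hn; exact hn.symm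

lemma desc_total {w m v : V} (h1 : t.desc w v) (h2 : t.desc m v) :
    t.desc w m ∨ t.desc m w := by
  obtain ⟨i, hi⟩ := h1; obtain ⟨j, hj⟩ := h2
  rcases le_total i j with h | h
  · right
    refine ⟨j - i, ?_⟩
    rw [← hi, ← Function.iterate_add_apply, Nat.sub_add_cancel h, hj]
  · left
    refine ⟨i - j, ?_⟩
    rw [← hj, ← Function.iterate_add_apply, Nat.sub_add_cancel h, hi]

lemma desc_of_depth_le {w m v : V} (h1 : t.desc w v) (h2 : t.desc m v)
    (hd : t.depth w ≤ t.depth m) : t.desc w m := by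
  rcases desc_total h1 h2 with h | h
  · exact h
  · have := eq_of_desc_of_depth_le h hd
    rw [← this]; exact desc_refl t m

lemma no_desc_parent {z : V} (hz : z ≠ t.root) : ¬ t.desc z (t.parent z) := by
  rintro ⟨n, hn⟩
  have h1 : t.parent^[n + 1] z = z := by rw [Function.iterate_succ_apply]; exact hn
  rcases depth_iterate t (n + 1) z with h' | h' <;> rw [h1] at h'
  · have : t.depth z ≠ 0 := fun h => hz (eq_root_of_depth_zero h)
    omega
  · exact hz h'

lemma parent_ne {z : V} (hz : z ≠ t.root) : t.parent z ≠ z := by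
  intro h
  apply hz
  have hall : ∀ n, t.parent^[n] z = z := by
    intro n; induction n with
    | zero => rfl
    | succ n ih => rw [Function.iterate_succ_apply', ih, h]
  obtain ⟨n, hn⟩ := t.reach z
  rw [hall n] at hn; exact hn

lemma desc_iff_parent {w z : V} : t.desc w z ↔ w = z ∨ t.desc w (t.parent z) := by
  constructor
  · rintro ⟨n, hn⟩
    cases n with
    | zero => left; exact hn.symm
    | succ n => right; exact ⟨n, by rwa [Function.iterate_succ_apply] at hn⟩
  · rintro (h | h)
    · rw [h]; exact desc_refl t z
    · exact desc_of_parent_desc h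

lemma leaf_desc_eq {y x : V} (hy : t.IsLeaf y) (h : t.desc y x) : x = y := by
  obtain ⟨n, hn⟩ := h
  induction n generalizing x with
  | zero => exact hn
  | succ n ih =>
    have h1 : t.parent^[n] (t.parent x) = y := by
      rwa [Function.iterate_succ_apply] at hn
    have h2 := ih h1
    by_contra hne
    exact hy.2 x hne h2

lemma exists_leaf_desc {w : V} (hw : w ≠ t.root) : ∃ l, t.IsLeaf l ∧ t.desc w l := by
  have hne : (Finset.univ.filter (fun z => t.desc w z)).Nonempty :=
    ⟨w, by simp [desc_refl]⟩
  obtain ⟨l, hl, hmax⟩ := Finset.exists_max_image _ (fun z => t.depth z) hne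
  simp only [Finset.mem_filter, Finset.mem_univ, true_and] at hl hmax
  have hlr : l ≠ t.root := by
    intro h; rw [h] at hl
    exact hw (eq_root_of_desc hl)
  refine ⟨l, ⟨hlr, ?_⟩, hl⟩
  intro u hu hpu
  have hur : u ≠ t.root := by
    intro h
    rw [h, t.parent_root] at hpu
    exact hlr hpu.symm
  have hdu : t.desc w u := desc_of_parent_desc (by rw [hpu]; exact hl)
  have := hmax u hdu
  have hd := depth_parent (t := t) hur
  rw [hpu] at hd
  omega

end Tree

variable {I E F M : Finset (Sym2 V)}

lemma rel_refl (t : Tree V) (I : Finset (Sym2 V)) (v : V) : rel t I v v :=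
  (relSetoid t I).iseqv.refl v

lemma rel_symm {u v : V} (h : rel t I u v) : rel t I v u :=
  (relSetoid t I).iseqv.symm h

lemma rel_trans {u v z : V} (h1 : rel t I u v) (h2 : rel t I v z) : rel t I u z :=
  (relSetoid t I).iseqv.trans h1 h2

lemma rel_of_desc_not_desc {x y m : V} (hxy : rel t I x y) (hm : t.desc m x)
    (hnot : ¬ t.desc m y) : rel t I x m := by
  intro w hw hp
  apply hxy w hw
  rcases hp with ⟨h1, h2⟩ | ⟨h1, h2⟩
  · left
    refine ⟨h1, fun hwy => ?_⟩
    rcases Tree.desc_total h1 hm with h | h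
    · exact h2 h
    · exact hnot (Tree.desc_trans h hwy)
  · exact absurd (Tree.desc_trans h1 hm) h2

lemma rel_of_desc_lca {p b s : V} (hpb : rel t I p b) (hsp : t.desc s p) (hsb : t.desc s b)
    (hmin : ∀ z, t.desc z p → t.desc z b → t.desc z s) : rel t I p s := by
  intro w hw hp
  apply hpb w hw
  rcases hp with ⟨h1, h2⟩ | ⟨h1, h2⟩
  · exact Or.inl ⟨h1, fun hwb => h2 (hmin w h1 hwb)⟩
  · exact absurd (Tree.desc_trans h1 hsp) h2

lemma rel_parent_of_covered {z : V} (hz : z ≠ t.root) (hcov : coveredBy t I z) :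
    rel t I z (t.parent z) := by
  intro w hw hp
  have hwz : w = z := by
    rcases hp with ⟨h1, h2⟩ | ⟨h1, h2⟩
    · rcases Tree.desc_iff_parent.mp h1 with h | h
      · exact h
      · exact absurd h h2
    · exact absurd (Tree.desc_of_parent_desc h1) h2
  rw [hwz]; exact hcov

lemma qleafRep_congr {u u' : V} (h : rel t I u u') (hl : qleafRep t I u) :
    qleafRep t I u' := by
  constructor
  · intro hr
    exact hl.1 (rel_trans h hr)
  · intro v hv
    exact rel_trans (hl.2 v (rel_trans hv (rel_symm h))) h

lemma matchedRep_congr {u u' : V} (h : rel t I u u') (hm : matchedRep t I M u) :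
    matchedRep t I M u' := by
  obtain ⟨e, he, z, hz, hr⟩ := hm
  exact ⟨e, he, z, hz, rel_trans hr h⟩

lemma qcompoundRep_congr {u u' : V} (h : rel t I u u') (hc : qcompoundRep t I u) :
    qcompoundRep t I u' := by
  rcases hc with ⟨w, hw, hr⟩ | hr
  · by_cases hwu : w = u'
    · have hne : u ≠ u' := fun he => hw (hwu.trans he.symm)
      exact Or.inl ⟨u, hne, rel_symm h⟩
    · exact Or.inl ⟨w, hwu, rel_trans (rel_symm h) hr⟩
  · exact Or.inr (rel_trans (rel_symm h) hr)

lemma inT_congr {c : QT t I} {x x' : V} (h : rel t I x x') (hx : inT t I c x) :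
    inT t I c x' := by
  obtain ⟨w, hwx, hwc⟩ := hx
  by_cases hd : t.desc w x'
  · exact ⟨w, hd, hwc⟩
  · have h1 : rel t I x w := rel_of_desc_not_desc h hwx hd
    exact ⟨x', Tree.desc_refl t x', rel_trans (rel_trans (rel_symm h) h1) hwc⟩

lemma inT_of_desc {c : QT t I} {w z : V} (h : t.desc w z) (hw : inT t I c w) :
    inT t I c z := by
  obtain ⟨w', h1, h2⟩ := hw
  exact ⟨w', Tree.desc_trans h1 h, h2⟩

lemma inT_self (t : Tree V) (I : Finset (Sym2 V)) (c : QT t I) : inT t I c c.out :=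
  ⟨c.out, Tree.desc_refl t _, rel_refl t I _⟩

lemma rel_out_mk (t : Tree V) (I : Finset (Sym2 V)) (x : V) :
    rel t I (qm t I x).out x :=
  Quotient.exact (Quotient.out_eq (qm t I x))

lemma leafdesc {u w z : V} (hl : qleafRep t I u) (hw : rel t I w u) (hd : t.desc w z) :
    rel t I z u := by
  obtain ⟨n, hn⟩ := hd
  induction n generalizing z with
  | zero =>
    have hzw : z = w := hn
    rw [hzw]; exact hw
  | succ n ih =>
    have h1 : t.parent^[n] (t.parent z) = w := by
      rwa [Function.iterate_succ_apply] at hn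
    exact hl.2 z (ih h1)

lemma eq_of_rel_not_compound {q z : V} (hq : ¬ qcompoundRep t I q) (h : rel t I q z) :
    z = q := by
  by_contra hne
  exact hq (Or.inl ⟨z, hne, h⟩)

lemma qdepth_congr {x y : V} (h : rel t I x y) : qdepth t I x = qdepth t I y := by
  unfold qdepth
  apply congrArg Finset.card
  ext w
  simp only [Finset.mem_filter, Finset.mem_univ, true_and]
  constructor
  · rintro ⟨hw, hcov, hd⟩
    refine ⟨hw, hcov, ?_⟩
    by_contra hnd
    exact hcov (h w hw (Or.inl ⟨hd, hnd⟩))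
  · rintro ⟨hw, hcov, hd⟩
    refine ⟨hw, hcov, ?_⟩
    by_contra hnd
    exact hcov (h w hw (Or.inr ⟨hd, hnd⟩))

lemma qdepth_succ {z : V} (hz : z ≠ t.root) (hcov : ¬ coveredBy t I z) :
    qdepth t I z = qdepth t I (t.parent z) + 1 := by
  unfold qdepth
  have hset : Finset.univ.filter (fun w => w ≠ t.root ∧ ¬ coveredBy t I w ∧ t.desc w z)
      = insert z (Finset.univ.filter
          (fun w => w ≠ t.root ∧ ¬ coveredBy t I w ∧ t.desc w (t.parent z))) := by
    ext w
    simp only [Finset.mem_insert, Finset.mem_filter, Finset.mem_univ, true_and]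
    constructor
    · rintro ⟨h1, h2, h3⟩
      rcases Tree.desc_iff_parent.mp h3 with h | h
      · exact Or.inl h
      · exact Or.inr ⟨h1, h2, h⟩
    · rintro (h | ⟨h1, h2, h3⟩)
      · subst h; exact ⟨hz, hcov, Tree.desc_refl t w⟩
      · exact ⟨h1, h2, Tree.desc_of_parent_desc h3⟩
  rw [hset, Finset.card_insert_of_notMem]
  simp only [Finset.mem_filter, Finset.mem_univ, true_and]
  rintro ⟨h1, h2, h3⟩
  exact Tree.no_desc_parent hz h3

lemma exists_qleaf {c : QT t I} (hnc : ¬ qcompoundRep t I c.out) :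
    ∃ x, inT t I c x ∧ qleafRep t I x := by
  have hne : (Finset.univ.filter (fun x => inT t I c x)).Nonempty :=
    ⟨c.out, by simp [inT_self]⟩
  obtain ⟨x, hx, hmax⟩ := Finset.exists_max_image _ (fun x => qdepth t I x) hne
  simp only [Finset.mem_filter, Finset.mem_univ, true_and] at hx hmax
  refine ⟨x, hx, ?_, ?_⟩
  · intro hr
    obtain ⟨w, hwx, hwc⟩ := hx
    by_cases hwr : w = t.root
    · subst hwr
      exact hnc (Or.inr (rel_symm hwc))
    · have h1 : rel t I x w :=
        rel_of_desc_not_desc hr hwx (fun hd => hwr (Tree.eq_root_of_desc hd))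
      exact hnc (Or.inr (rel_trans (rel_symm hwc) (rel_trans (rel_symm h1) hr)))
  · intro z hz
    by_contra hnz
    have hzr : z ≠ t.root := by
      intro h
      subst h
      rw [t.parent_root] at hz
      exact hnz hz
    have hcv : ¬ coveredBy t I z :=
      fun hc => hnz (rel_trans (rel_parent_of_covered hzr hc) hz)
    have hzin : inT t I c z :=
      inT_of_desc ⟨1, rfl⟩ (inT_congr (rel_symm hz) hx)
    have hq : qdepth t I z = qdepth t I x + 1 := by
      rw [qdepth_succ hzr hcv, qdepth_congr hz]
    have := hmax z hzin
    omega

lemma leafclass {u : V} (hl : qleafRep t I u) :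
    ∃ w, w ≠ t.root ∧ ¬ coveredBy t I w ∧ rel t I w u ∧
      ∀ z, rel t I z u ↔ t.desc w z := by
  have hex : ∃ w, w ≠ t.root ∧ ¬ coveredBy t I w ∧ t.desc w u := by
    by_contra hno
    push_neg at hno
    apply hl.1
    intro w hw hp
    rcases hp with ⟨h1, h2⟩ | ⟨h1, h2⟩
    · by_contra hcov
      exact (hno w hw hcov) h1
    · exact absurd (Tree.eq_root_of_desc h1) hw
  obtain ⟨w0, h01, h02, h03⟩ := hex
  obtain ⟨w, hw, hmax⟩ := Finset.exists_max_image
    (Finset.univ.filter (fun w => w ≠ t.root ∧ ¬ coveredBy t I w ∧ t.desc w u))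
    (fun w => t.depth w) ⟨w0, by simp [h01, h02, h03]⟩
  simp only [Finset.mem_filter, Finset.mem_univ, true_and] at hw hmax
  have hrel : rel t I w u := by
    intro w' hw' hp
    rcases hp with ⟨h1, h2⟩ | ⟨h1, h2⟩
    · exact absurd (Tree.desc_trans h1 hw.2.2) h2
    · by_contra hcov
      have hmem : w' ∈ Finset.univ.filter
          (fun w => w ≠ t.root ∧ ¬ coveredBy t I w ∧ t.desc w u) := by
        simp [hw', hcov, h1]
      simp only [Finset.mem_filter, Finset.mem_univ, true_and] at hmem
      have hle := hmax w' hmem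
      exact h2 (Tree.desc_of_depth_le h1 hw.2.2 hle)
  refine ⟨w, hw.1, hw.2.1, hrel, fun z => ⟨?_, fun hd => leafdesc hl hrel hd⟩⟩
  intro hz
  by_contra hnd
  exact hw.2.1 (hz w hw.1 (Or.inr ⟨hw.2.2, hnd⟩))

lemma coveredBy_orient {Y : Finset (Sym2 V)} {w : V} (h : coveredBy t Y w) :
    ∃ p q, s(p, q) ∈ Y ∧ t.desc w p ∧ ¬ t.desc w q := by
  obtain ⟨e, he, u, v, heq, hp⟩ := h
  subst heq
  rcases hp with ⟨h1, h2⟩ | ⟨h1, h2⟩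
  · exact ⟨u, v, he, h1, h2⟩
  · exact ⟨v, u, by rwa [Sym2.eq_swap] at he, h1, h2⟩

lemma locksAt_facts {b b' a v : V} (h : LocksAt t E b b' a v) :
    t.IsLeaf a ∧ t.IsLeaf b ∧ t.IsLeaf b' ∧ t.desc v a ∧ t.desc v b ∧ t.desc v b' := by
  obtain ⟨-, -, -, -, hset, -, -, -⟩ := h
  have ha : a ∈ {x | t.IsLeaf x ∧ t.desc v x} := by rw [hset]; simp
  have hb : b ∈ {x | t.IsLeaf x ∧ t.desc v x} := by rw [hset]; simp
  have hb' : b' ∈ {x | t.IsLeaf x ∧ t.desc v x} := by rw [hset]; simp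
  exact ⟨ha.1, hb.1, hb'.1, ha.2, hb.2, hb'.2⟩

lemma up_exists {a z : V} (h : s(a, z) ∈ E) : ∃ u, IsUpLink t E a u := by
  have hne : (Finset.univ.filter (fun x => s(a, x) ∈ E)).Nonempty := ⟨z, by simp [h]⟩
  obtain ⟨u, hu, hmin⟩ := Finset.exists_min_image _ (fun x => t.depth x) hne
  simp only [Finset.mem_filter, Finset.mem_univ, true_and] at hu hmin
  exact ⟨u, hu, fun x hx => hmin x hx⟩

lemma lockingtree_of_locks {a b b' : V} (h : Locks t E b b' a) :
    ∃ v, IsLockingTree t E a b b' v := by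
  obtain ⟨v0, hv0⟩ := h
  obtain ⟨v, hv, hmax⟩ := Finset.exists_max_image
    (Finset.univ.filter (fun v => LocksAt t E b b' a v)) (fun v => t.depth v)
    ⟨v0, by simp [hv0]⟩
  simp only [Finset.mem_filter, Finset.mem_univ, true_and] at hv hmax
  refine ⟨v, hv, ?_⟩
  intro v' hv'
  have h1 := (locksAt_facts hv').2.2.2.1
  have h2 := (locksAt_facts hv).2.2.2.1
  exact Tree.desc_of_depth_le h1 h2 (hmax v' (by simp [hv']))

lemma psi_no_lock {I₀ : Finset (Sym2 V)} (hpsi : PSI t E M I₀) :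
    ∀ a b b' v u, IsLockingTree t E a b b' v → (∀ e ∈ M, a ∉ e) → (∀ e ∈ M, b ∉ e) →
      (∀ e ∈ M, b' ∉ e) → (∀ c c' v', IsLockingTree t E b c c' v' → t.desc v v') →
      IsUpLink t E a u → False := by
  induction hpsi with
  | start hlp hstop =>
    intro a b b' v u h1 h2 h3 h4 h5 h6
    exact hstop _ ⟨a, b, b', v, u, h1, h2, h3, h4, h5, h6, rfl⟩
  | link h hs ih => exact ih
  | semi h hs ih => exact ih

lemma noLockUnmatched {I₀ : Finset (Sym2 V)} (hpsi : PSI t E M I₀) :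
    ∀ v a b b', IsLockingTree t E a b b' v → (∀ e ∈ M, a ∉ e) → (∀ e ∈ M, b ∉ e) →
      (∀ e ∈ M, b' ∉ e) → False := by
  suffices H : ∀ n v a b b', t.depth v < n → IsLockingTree t E a b b' v →
      (∀ e ∈ M, a ∉ e) → (∀ e ∈ M, b ∉ e) → (∀ e ∈ M, b' ∉ e) → False by
    intro v a b b' h1 h2 h3 h4
    exact H (t.depth v + 1) v a b b' (Nat.lt_succ_self _) h1 h2 h3 h4
  intro n
  induction n with
  | zero => intro v a b b' h; omega
  | succ n ih =>
    intro v a b b' hdep hLT ha hb hb'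
    obtain ⟨hvr, hbb'E, hbb', hb'a, hset, htwin, habE, hcl⟩ := hLT.1
    obtain ⟨u, hu⟩ := up_exists habE
    by_cases hmin : ∀ c c' v', IsLockingTree t E b c c' v' → t.desc v v'
    · exact psi_no_lock hpsi a b b' v u hLT ha hb hb' hmin hu
    · push_neg at hmin
      obtain ⟨c1, c2, v', hLT', hnd⟩ := hmin
      have facts := locksAt_facts (hLT.1)
      have facts' := locksAt_facts (hLT'.1)
      have hv'v : t.desc v' v := by
        rcases Tree.desc_total facts'.2.2.2.1 facts.2.2.2.2.1 with h | h
        · exact h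
        · exact absurd h hnd
      have hne : v' ≠ v := fun h => hnd (h ▸ Tree.desc_refl t v)
      have hdlt : t.depth v' < t.depth v := by
        have h1 := Tree.depth_le_of_desc hv'v
        rcases h1.lt_or_eq with h | h
        · exact h
        · exact absurd (Tree.eq_of_desc_of_depth_le hv'v (le_of_eq h.symm)) hne
      obtain ⟨-, -, hc12, hc2b, hset', htwin', hbc1E, -⟩ := hLT'.1
      have hamem : a ∈ ({b, c1, c2} : Set V) := by
        rw [← hset']
        exact ⟨facts.1, Tree.desc_trans hv'v facts.2.2.2.1⟩
      have hb'mem : b' ∈ ({b, c1, c2} : Set V) := by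
        rw [← hset']
        exact ⟨facts.2.2.1, Tree.desc_trans hv'v facts.2.2.2.2.2⟩
      have hab : a ≠ b := htwin.2.2.1
      have hab' : a ≠ b' := fun h => hb'a h.symm
      have hb'b : b' ≠ b := fun h => hbb' h.symm
      simp only [Set.mem_insert_iff, Set.mem_singleton_iff] at hamem hb'mem
      have hkey : (∀ e ∈ M, c1 ∉ e) ∧ (∀ e ∈ M, c2 ∉ e) := by
        rcases hamem with h | h | h
        · exact absurd h hab
        · rcases hb'mem with h' | h' | h'
          · exact absurd h' hb'b
          · exact absurd (h.trans h'.symm) hab'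
          · exact ⟨h ▸ ha, h' ▸ hb'⟩
        · rcases hb'mem with h' | h' | h'
          · exact absurd h' hb'b
          · exact ⟨h' ▸ hb', h ▸ ha⟩
          · exact absurd (h.trans h'.symm) hab'
      exact ih v' b c1 c2 (by omega) hLT' hb hkey.1 hkey.2

lemma lca_exists (t : Tree V) (x y : V) :
    ∃ m, t.desc m x ∧ t.desc m y ∧ ∀ z, t.desc z x → t.desc z y → t.desc z m := by
  obtain ⟨m, hm, hmax⟩ := Finset.exists_max_image
    (Finset.univ.filter (fun m => t.desc m x ∧ t.desc m y)) (fun m => t.depth m)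
    ⟨t.root, by simp [Tree.desc_root]⟩
  simp only [Finset.mem_filter, Finset.mem_univ, true_and] at hm hmax
  refine ⟨m, hm.1, hm.2, fun z h1 h2 => ?_⟩
  exact Tree.desc_of_depth_le h1 hm.1 (hmax z (by simp [h1, h2]))

lemma link_to_lca (hsh : ShadowClosed t E) {x y m : V} (hxy : s(x, y) ∈ E)
    (hmx : t.desc m x) (hmy : t.desc m y)
    (hmin : ∀ z, t.desc z x → t.desc z y → t.desc z m) (hne : m ≠ y) :
    s(y, m) ∈ E := by
  apply hsh _ hxy (s(y, m)) (by rw [Sym2.mk_isDiag_iff]; exact fun h => hne h.symm)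
  intro w hc
  obtain ⟨u, v, heq, hp⟩ := hc
  have hpym : t.onPath w y m := by
    rcases Sym2.eq_iff.mp heq with ⟨h1, h2⟩ | ⟨h1, h2⟩
    · rw [← h1, ← h2] at hp; exact hp
    · rw [← h1, ← h2] at hp
      rcases hp with ⟨a1, a2⟩ | ⟨a1, a2⟩
      · exact Or.inr ⟨a1, a2⟩
      · exact Or.inl ⟨a1, a2⟩
  refine ⟨x, y, rfl, ?_⟩
  rcases hpym with ⟨h1, h2⟩ | ⟨h1, h2⟩
  · exact Or.inr ⟨h1, fun hwx => h2 (hmin w hwx h1)⟩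
  · exact absurd (Tree.desc_trans h1 hmy) h2

lemma uplink_anc (hnd : ∀ e ∈ E, ¬ e.IsDiag) (hsh : ShadowClosed t E) {a u : V}
    (hleaf : t.IsLeaf a) (hu : IsUpLink t E a u) : t.desc u a := by
  obtain ⟨m, hmu, hma, hmin⟩ := lca_exists t u a
  have hne : m ≠ a := by
    intro h
    rw [h] at hmu
    have huu := Tree.leaf_desc_eq hleaf hmu
    apply hnd _ hu.1
    rw [huu, Sym2.mk_isDiag_iff]
  have hsam : s(a, m) ∈ E :=
    link_to_lca hsh (x := u) (y := a) (by rw [Sym2.eq_swap]; exact hu.1) hmu hma hmin hne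
  have hdep : t.depth u ≤ t.depth m := hu.2 m hsam
  have heq : m = u := Tree.eq_of_desc_of_depth_le hmu hdep
  rw [← heq]; exact hma

lemma locked_link_inside (hnd : ∀ e ∈ E, ¬ e.IsDiag) (hsh : ShadowClosed t E)
    {a z v₀ b b' : V} (hlock : LocksAt t E b b' a v₀) (hlink : s(a, z) ∈ E) :
    t.desc v₀ z := by
  have hleaf : t.IsLeaf a := (locksAt_facts hlock).1
  have hcl : AClosed t E v₀ a := hlock.2.2.2.2.2.2.2
  obtain ⟨upn, hup⟩ := up_exists hlink
  have hupanc : t.desc upn a := uplink_anc hnd hsh hleaf hup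
  have hv₀up : t.desc v₀ upn := hcl upn hup
  obtain ⟨m, hma, hmz, hmin⟩ := lca_exists t a z
  have hne : m ≠ a := by
    intro h
    rw [h] at hmz
    have hza := Tree.leaf_desc_eq hleaf hmz
    apply hnd _ hlink
    rw [hza, Sym2.mk_isDiag_iff]
  have hsam : s(a, m) ∈ E :=
    link_to_lca hsh (x := z) (y := a) (by rw [Sym2.eq_swap]; exact hlink) hmz hma
      (fun z' h1 h2 => hmin z' h2 h1) hne
  have hdep : t.depth upn ≤ t.depth m := hup.2 m hsam
  have hanc : t.desc upn m := Tree.desc_of_depth_le hupanc hma hdep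
  exact Tree.desc_trans (Tree.desc_trans hv₀up hanc) hmz

end Aux

/-- under the Credit and Partial Solution Invariants, there is no deficient
semi-closed tree `T'` of `T/I` with `M(T') = ∅`. -/
theorem no_deficient_M0 (t : Tree V) (E F M I : Finset (Sym2 V))
    (hnd : ∀ e ∈ E, ¬ e.IsDiag) (hsh : ShadowClosed t E) (hEcov : IsCover t E)
    (hF : IsGoodCover t E F) (hM : IsMaxLeafMatching t E M)
    (hMW : ∀ e ∈ M, ¬ IsTwinLinkE t e ∧ ¬ IsLockingLink t E e)
    (hCI : CreditInvariant t E F M I) (hPSI : PSI t E M I)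
    (hnoGreedy : ∀ I₂, ¬ LinkStep t E M I I₂) :
    ∀ c : QT t I, SemiClosedQ t I E M c → (MlinksQ t I M c).card = 0 →
      ¬ DeficientQ t I E F M c := by
  intro c hsc h0 hdef
  have hFE : F ⊆ E := hF.1
  have hFcov : IsCover t F := hF.2.1.1
  have hsemiapp := hsc.2
  -- clean form of the deficiency hypothesis
  have hdefQ : ((Finset.univ.filter (fun d : QT t I => below t I c d ∧
      ((qleafRep t I d.out ∧ ¬ matchedRep t I M d.out) ∨ qcompoundRep t I d.out))).card : ℚ)
      + (ticketsQ t I E F M c : ℚ) / 2 < ((UsetQ t I M c).card : ℚ) + 1 := by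
    unfold DeficientQ creditQ couponsQ at hdef
    rw [h0] at hdef
    push_cast at hdef
    linarith
  have htnn : (0 : ℚ) ≤ (ticketsQ t I E F M c : ℚ) := by positivity
  have hUsub : UsetQ t I M c ⊆ Finset.univ.filter (fun d : QT t I => below t I c d ∧
      ((qleafRep t I d.out ∧ ¬ matchedRep t I M d.out) ∨ qcompoundRep t I d.out)) := by
    intro d hd
    unfold UsetQ at hd
    simp only [Finset.mem_filter, Finset.mem_univ, true_and] at hd ⊢
    exact ⟨hd.1, Or.inl ⟨hd.2.1, hd.2.2⟩⟩
  -- matched leaves below c would give a link of M(T')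
  have D3 : ∀ z, inT t I c z → qleafRep t I z → ¬ matchedRep t I M z := by
    intro z hin hl hm
    obtain ⟨e, he, z', hz', hr⟩ := hm
    have hz'in : inT t I c z' := inT_congr (rel_symm hr) hin
    rcases hsc.1 e he with hall | hnone
    · have hmem : e ∈ MlinksQ t I M c := Finset.mem_filter.mpr ⟨he, hall⟩
      rw [Finset.card_eq_zero.mp h0] at hmem
      exact absurd hmem (Finset.notMem_empty e)
    · exact hnone z' hz' hz'in
  -- compound nodes below c must be unmatched leaves
  have D2 : ∀ z, inT t I c z → qcompoundRep t I z →
      (qleafRep t I z ∧ ¬ matchedRep t I M z) := by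
    intro z hin hcomp
    by_contra hnot
    have hrelz := rel_out_mk t I z
    have hd1 : qm t I z ∈ Finset.univ.filter (fun d : QT t I => below t I c d ∧
        ((qleafRep t I d.out ∧ ¬ matchedRep t I M d.out) ∨ qcompoundRep t I d.out)) := by
      simp only [Finset.mem_filter, Finset.mem_univ, true_and]
      constructor
      · show inT t I c (qm t I z).out
        exact inT_congr (rel_symm hrelz) hin
      · exact Or.inr (qcompoundRep_congr (rel_symm hrelz) hcomp)
    have hd2 : qm t I z ∉ UsetQ t I M c := by
      unfold UsetQ
      simp only [Finset.mem_filter, Finset.mem_univ, true_and]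
      rintro ⟨hb, hl, hm⟩
      exact hnot ⟨qleafRep_congr hrelz hl,
        fun hmz => hm (matchedRep_congr (rel_symm hrelz) hmz)⟩
    have hcard : (UsetQ t I M c).card < (Finset.univ.filter (fun d : QT t I =>
        below t I c d ∧ ((qleafRep t I d.out ∧ ¬ matchedRep t I M d.out) ∨
          qcompoundRep t I d.out))).card :=
      Finset.card_lt_card ((Finset.ssubset_iff_of_subset hUsub).mpr ⟨_, hd1, hd2⟩)
    have hq : ((UsetQ t I M c).card : ℚ) + 1 ≤ ((Finset.univ.filter (fun d : QT t I =>
        below t I c d ∧ ((qleafRep t I d.out ∧ ¬ matchedRep t I M d.out) ∨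
          qcompoundRep t I d.out))).card : ℚ) := by
      exact_mod_cast Nat.succ_le_of_lt hcard
    linarith
  -- leaves of T below c are leaves of T/I
  have hqleaf_of_leaf : ∀ z, inT t I c z → t.IsLeaf z → qleafRep t I z := by
    intro z hin hl
    by_cases hcomp : qcompoundRep t I z
    · exact (D2 z hin hcomp).1
    · constructor
      · intro hr; exact hcomp (Or.inr hr)
      · intro v hv
        have hpv : t.parent v = z := eq_of_rel_not_compound hcomp (rel_symm hv)
        by_cases hvz : v = z
        · rw [hvz]; exact rel_refl t I z
        · exact absurd hpv (hl.2 v hvz)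
  have hunm_lit : ∀ z, inT t I c z → qleafRep t I z → ∀ e ∈ M, z ∉ e := by
    intro z hin hl e he hz
    exact D3 z hin hl ⟨e, he, z, hz, rel_refl t I z⟩
  -- the no-greedy-contraction hypothesis, in class form
  have hlinkstep : ∀ p q, s(p, q) ∈ E → ¬ rel t I p q → inT t I c p → inT t I c q →
      qleafRep t I p → qleafRep t I q → False := by
    intro p q h1 h2 hip hiq hlp hlq
    exact hnoGreedy _ ⟨p, q, h1, h2, hlp, hlq, D3 p hip hlp, D3 q hiq hlq, rfl⟩
  -- no leaf of an unmatched leaf class of T' is a locked leaf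
  have hnotlocked : ∀ z, inT t I c z → qleafRep t I z → ¬ IsLockedLeaf t E z := by
    rintro z hin hl ⟨b, b', v0, hv0⟩
    have hfacts := locksAt_facts hv0
    have hzbE : s(z, b) ∈ E := hv0.2.2.2.2.2.2.1
    have hbin : inT t I c b := hsemiapp z b hzbE hin hl (D3 z hin hl)
    have hlb : qleafRep t I b := hqleaf_of_leaf b hbin hfacts.2.1
    have hb'in : inT t I c b' := hsemiapp b b' hv0.2.1 hbin hlb (D3 b hbin hlb)
    have hlb' : qleafRep t I b' := hqleaf_of_leaf b' hb'in hfacts.2.2.1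
    obtain ⟨v, hv⟩ := lockingtree_of_locks (⟨v0, hv0⟩ : Locks t E b b' z)
    exact noLockUnmatched hPSI v z b b' hv (hunm_lit z hin hl) (hunm_lit b hbin hlb)
      (hunm_lit b' hb'in hlb')
  -- internal original nodes of T' lie in X'
  have hXmem : ∀ z, inT t I c z → ¬ qleafRep t I z → ¬ qcompoundRep t I z →
      (¬ t.IsLeaf z ∧ (qm t I z) ∈ XsetQ t I E c ∧ (qm t I z).out = z) := by
    intro z hin hnl hnc
    have hout : (qm t I z).out = z :=
      eq_of_rel_not_compound hnc (rel_symm (rel_out_mk t I z))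
    have hnleaf : ¬ t.IsLeaf z := fun hl => hnl (hqleaf_of_leaf z hin hl)
    have hnstem : ¬ IsStem t E z := by
      rintro ⟨a, b, htw, hE', hlca⟩
      have hza : t.desc z a := hlca.1
      have hzb : t.desc z b := hlca.2.1
      have hain : inT t I c a := inT_of_desc hza hin
      have hbin : inT t I c b := inT_of_desc hzb hin
      by_cases hab : rel t I a b
      · have hrz : rel t I a z := rel_of_desc_lca hab hza hzb hlca.2.2
        exact hnc (Or.inl ⟨a, fun h => hnleaf (h ▸ htw.1), rel_symm hrz⟩)
      · exact hlinkstep a b hE' hab hain hbin (hqleaf_of_leaf a hain htw.1)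
          (hqleaf_of_leaf b hbin htw.2.1)
    refine ⟨hnleaf, ?_, hout⟩
    unfold XsetQ
    simp only [Finset.mem_filter, Finset.mem_univ, true_and]
    refine ⟨?_, ?_, ?_⟩
    · show inT t I c (qm t I z).out
      rw [hout]; exact hin
    · rw [hout]; exact hnc
    · rw [hout]
      unfold Xset
      simp only [Finset.mem_filter, Finset.mem_univ, true_and]
      exact ⟨hnleaf, hnstem⟩
  -- the root class of T' is neither a leaf of T/I nor compound
  have hCleafcontra : ∀ u, rel t I u c.out → qleafRep t I u → False := by
    intro u hrel hl
    obtain ⟨w, hwr, hwcov, hwrel, hwiff⟩ := leafclass hl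
    obtain ⟨p, q, hpqF, hdp, hdq⟩ := coveredBy_orient (hFcov w hwr)
    have hpu : rel t I p u := (hwiff p).mpr hdp
    have hqu : ¬ rel t I q u := fun h => hdq ((hwiff q).mp h)
    have hin : inT t I c u := ⟨u, Tree.desc_refl t u, hrel⟩
    have hqin : inT t I c q := hsemiapp p q (hFE hpqF) (inT_congr (rel_symm hpu) hin)
      (qleafRep_congr (rel_symm hpu) hl) (fun hm => D3 u hin hl (matchedRep_congr hpu hm))
    obtain ⟨w', hw'q, hw'c⟩ := hqin
    exact hqu (leafdesc hl (rel_trans hw'c (rel_symm hrel)) hw'q)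
  have hCnc : ¬ qcompoundRep t I c.out := fun hcomp =>
    hCleafcontra c.out (rel_refl t I c.out) (D2 c.out (inT_self t I c) hcomp).1
  have hsingle : ∀ z, rel t I c.out z → z = c.out := fun z h =>
    eq_of_rel_not_compound hCnc h
  -- a leaf class of T' and its ticket
  obtain ⟨x₀, hx₀in, hx₀l⟩ := exists_qleaf hCnc
  obtain ⟨w, hwr, hwcov, hwrel, hwiff⟩ := leafclass hx₀l
  obtain ⟨p, q, hpqF, hdp, hdq⟩ := coveredBy_orient (hFcov w hwr)
  have hpu : rel t I p x₀ := (hwiff p).mpr hdp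
  have hqu : ¬ rel t I q x₀ := fun h => hdq ((hwiff q).mp h)
  have hpin : inT t I c p := inT_congr (rel_symm hpu) hx₀in
  have hlp : qleafRep t I p := qleafRep_congr (rel_symm hpu) hx₀l
  have hqin : inT t I c q := hsemiapp p q (hFE hpqF) hpin hlp (D3 p hpin hlp)
  have hqnl : ¬ qleafRep t I q := by
    intro hlq
    apply hlinkstep p q (hFE hpqF) ?_ hpin hqin hlp hlq
    intro h
    exact hqu (rel_trans (rel_symm h) hpu)
  have hqnc : ¬ qcompoundRep t I q := fun h => hqnl (D2 q hqin h).1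
  obtain ⟨hqnleaf, hqX, hqout⟩ := hXmem q hqin hqnl hqnc
  have hfJ : s(p, q) ∈ Jlinks t E F := by
    unfold Jlinks
    rw [Finset.mem_filter]
    refine ⟨hpqF, ?_⟩
    intro z hz
    rcases Sym2.mem_iff.mp hz with h | h
    · rw [h]; exact hnotlocked p hpin hlp
    · rw [h]
      rintro ⟨b, b', v0, hv0⟩
      exact hqnleaf (locksAt_facts hv0).1
  -- the ticket at the top of T'
  have hcr : c.out ≠ t.root := fun h =>
    hCnc (Or.inr (by rw [h]; exact rel_refl t I t.root))
  obtain ⟨x, y, hxyF, hdx, hdy⟩ := coveredBy_orient (hFcov c.out hcr)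
  have hxin : inT t I c x := ⟨c.out, hdx, rel_refl t I c.out⟩
  have hyout : ¬ inT t I c y := by
    rintro ⟨w', h1, h2⟩
    rw [hsingle w' (rel_symm h2)] at h1
    exact hdy h1
  have hxnl : ¬ qleafRep t I x := fun hl =>
    hyout (hsemiapp x y (hFE hxyF) hxin hl (D3 x hxin hl))
  have hxnc : ¬ qcompoundRep t I x := fun h => hxnl (D2 x hxin h).1
  obtain ⟨hxnleaf, hxX, hxout⟩ := hXmem x hxin hxnl hxnc
  have hgJ : s(x, y) ∈ Jlinks t E F := by
    unfold Jlinks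
    rw [Finset.mem_filter]
    refine ⟨hxyF, ?_⟩
    intro z hz
    rcases Sym2.mem_iff.mp hz with h | h
    · rw [h]
      rintro ⟨b, b', v0, hv0⟩
      exact hxnleaf (locksAt_facts hv0).1
    · rw [h]
      rintro ⟨b, b', v0, hv0⟩
      have hyleaf : t.IsLeaf y := (locksAt_facts hv0).1
      obtain ⟨m, hmx, hmy, hmlca⟩ := lca_exists t x y
      have hmney : m ≠ y := by
        intro hh
        rw [hh] at hmx
        exact hyout ((Tree.leaf_desc_eq hyleaf hmx) ▸ hxin)
      have hym : s(y, m) ∈ E := link_to_lca hsh (hFE hxyF) hmx hmy hmlca hmney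
      obtain ⟨upn, hup⟩ := up_exists hym
      have hcl : AClosed t E v0 y := hv0.2.2.2.2.2.2.2
      have hv0up : t.desc v0 upn := hcl upn hup
      have hupanc : t.desc upn y := uplink_anc hnd hsh hyleaf hup
      have hupm : t.desc upn m := Tree.desc_of_depth_le hupanc hmy (hup.2 m hym)
      have hv0m : t.desc v0 m := Tree.desc_trans hv0up hupm
      have hmc : t.desc m c.out := by
        rcases Tree.desc_total hmx hdx with hh | hh
        · exact hh
        · exact absurd (Tree.desc_trans hh hmy) hdy
      have hv0c : t.desc v0 c.out := Tree.desc_trans hv0m hmc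
      obtain ⟨l, hlleaf, hwl⟩ := Tree.exists_leaf_desc hwr
      have hlrel : rel t I l x₀ := (hwiff l).mpr hwl
      have hlin : inT t I c l := inT_congr (rel_symm hlrel) hx₀in
      have hcw : t.desc c.out w := by
        obtain ⟨w2, h1, h2⟩ := inT_congr (rel_symm hwrel) hx₀in
        rw [hsingle w2 (rel_symm h2)] at h1
        exact h1
      have hv0l : t.desc v0 l := Tree.desc_trans (Tree.desc_trans hv0c hcw) hwl
      have hlmem : l ∈ ({y, b, b'} : Set V) := by
        rw [← hv0.2.2.2.2.1]
        exact ⟨hlleaf, hv0l⟩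
      have hlq : qleafRep t I l := qleafRep_congr (rel_symm hlrel) hx₀l
      have hybE : s(y, b) ∈ E := hv0.2.2.2.2.2.2.1
      simp only [Set.mem_insert_iff, Set.mem_singleton_iff] at hlmem
      rcases hlmem with hh | hh | hh
      · exact hyout (hh ▸ hlin)
      · apply hyout
        exact hsemiapp b y (by rw [Sym2.eq_swap]; exact hybE) (hh ▸ hlin) (hh ▸ hlq)
          (D3 b (hh ▸ hlin) (hh ▸ hlq))
      · have hb'in : inT t I c b' := hh ▸ hlin
        have hb'l : qleafRep t I b' := hh ▸ hlq
        have hbin : inT t I c b := hsemiapp b' b (by rw [Sym2.eq_swap]; exact hv0.2.1)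
          hb'in hb'l (D3 b' hb'in hb'l)
        have hbl : qleafRep t I b := hqleaf_of_leaf b hbin (locksAt_facts hv0).2.1
        apply hyout
        exact hsemiapp b y (by rw [Sym2.eq_swap]; exact hybE) hbin hbl (D3 b hbin hbl)
  -- the two ticket links are distinct
  have hfgne : s(p, q) ≠ s(x, y) := by
    intro h
    have hy : y ∈ s(p, q) := by rw [h]; exact Sym2.mem_mk_right x y
    rcases Sym2.mem_iff.mp hy with h' | h'
    · exact hyout (h' ▸ hpin)
    · exact hyout (h' ▸ hqin)
  -- at least two tickets
  have hkey : 2 ≤ ∑ d ∈ XsetQ t I E c, deg (Jlinks t E F) d.out := by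
    by_cases hqx : (qm t I q) = (qm t I x)
    · have hxq : x = q := by
        have h1 : rel t I q x := Quotient.exact hqx
        exact eq_of_rel_not_compound hqnc h1
      have h2 : 2 ≤ deg (Jlinks t E F) q := by
        apply Finset.one_lt_card.mpr
        refine ⟨s(p, q), ?_, s(x, y), ?_, hfgne⟩
        · exact Finset.mem_filter.mpr ⟨hfJ, Sym2.mem_mk_right p q⟩
        · exact Finset.mem_filter.mpr ⟨hgJ, by rw [hxq] at *; exact Sym2.mem_mk_left q y⟩
      calc 2 ≤ deg (Jlinks t E F) ((qm t I q).out) := by rw [hqout]; exact h2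
        _ ≤ ∑ d ∈ XsetQ t I E c, deg (Jlinks t E F) d.out :=
          Finset.single_le_sum (f := fun d : QT t I => deg (Jlinks t E F) d.out)
            (fun i _ => Nat.zero_le _) hqX
    · have hsub : ({qm t I q, qm t I x} : Finset (QT t I)) ⊆ XsetQ t I E c := by
        intro d hd
        rcases Finset.mem_insert.mp hd with h | h
        · rw [h]; exact hqX
        · rw [Finset.mem_singleton.mp h]; exact hxX
      have hsum : deg (Jlinks t E F) ((qm t I q).out) + deg (Jlinks t E F) ((qm t I x).out)
          ≤ ∑ d ∈ XsetQ t I E c, deg (Jlinks t E F) d.out := by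
        have hs := Finset.sum_le_sum_of_subset
          (f := fun d : QT t I => deg (Jlinks t E F) d.out) hsub
        rwa [Finset.sum_pair hqx] at hs
      have h1 : 1 ≤ deg (Jlinks t E F) ((qm t I q).out) := by
        rw [hqout]
        exact Finset.card_pos.mpr ⟨s(p, q),
          Finset.mem_filter.mpr ⟨hfJ, Sym2.mem_mk_right p q⟩⟩
      have h2 : 1 ≤ deg (Jlinks t E F) ((qm t I x).out) := by
        rw [hxout]
        exact Finset.card_pos.mpr ⟨s(x, y),
          Finset.mem_filter.mpr ⟨hgJ, Sym2.mem_mk_left x y⟩⟩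
      omega
  have htick : 2 ≤ ticketsQ t I E F M c := by
    unfold ticketsQ
    omega
  -- final arithmetic contradiction
  have hUle : ((UsetQ t I M c).card : ℚ) ≤ ((Finset.univ.filter (fun d : QT t I =>
      below t I c d ∧ ((qleafRep t I d.out ∧ ¬ matchedRep t I M d.out) ∨
        qcompoundRep t I d.out))).card : ℚ) := by
    exact_mod_cast Finset.card_le_card hUsub
  have htickQ : (2 : ℚ) ≤ (ticketsQ t I E F M c : ℚ) := by exact_mod_cast htick
  linarith


end TAP
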